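/- arXiv:2309.01556 — 2 statements merged into one kernel-verified Lean document; each statement's English description precedes it below -/
import Mathlib

section
/- Let p ≥ 3, n ≥ k ≥ 1, and n0 = n−k+1. For every j ∈ [n0, n] and every i ∈ [0, p^n−1], the suffix of length j of h^{n,k}_{[i]} equals h^{j, k−n+j}_{[i mod p^j]}. In particular, for every j ∈ [n0,n] the sequence of length-j suffixes of the terms of h^{n,k} is p^j-periodic (a concatenation power of the sequence h^{j,k−n+j}). -/
/-!
For `k ≥ 2` each term of `h^{n,k}` is one letter followed by the term of `h^{n-1,k-1}` of index
`i mod p^{n-1}`. Peeling off `n - j` letters therefore leaves the term of `h^{j,k-n+j}` of index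
`(i mod p^{n-1}) mod ⋯ mod p^j = i mod p^j`, which is `p^j`-periodic in `i`.
-/

/-- Hamming distance between two words (lists) of the same length:
the number of positions in which they differ. -/
def hammingL {α : Type*} [DecidableEq α] (w w' : List α) : ℕ :=
  ((w.zip w').filter fun q => decide (q.1 ≠ q.2)).length

/-- The `p`-ary reflected Gray code over words of length `m`. -/
def refGray (p : ℕ) [NeZero p] : ℕ → List (List (Fin p))
  | 0 => [[]]
  | m + 1 =>
      (List.range p).flatMap fun a =>
        (if a % 2 = 0 then refGray p m else (refGray p m).reverse).map
          fun w => (⟨a % p, Nat.mod_lt a (NeZero.pos p)⟩ : Fin p) :: w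

/-- The cyclic permutation `θ : x ↦ x + 1 mod p`. -/
def cyc (p : ℕ) [NeZero p] (x : Fin p) : Fin p :=
  ⟨(x.val + 1) % p, Nat.mod_lt _ (NeZero.pos p)⟩

/-- The sequence `h^{n,k}`: `hseq p n k i` is the term of index `i` of `h^{n,k}`.
For `k = 1` it is the `p`-ary reflected Gray code over words of length `n`; for `k ≥ 2`,
writing `i = q·p^{n-1} + r`, the term is `θ^{q+r}(0) · h^{n-1,k-1}_{[r]}`. -/
def hseq (p : ℕ) [NeZero p] : ℕ → ℕ → ℕ → List (Fin p)
  | _, 0, _ => []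
  | n, 1, i => (refGray p n).getD i []
  | n, k + 2, i =>
      (cyc p)^[i / p ^ (n - 1) + i % p ^ (n - 1)] ⟨0, NeZero.pos p⟩ ::
        hseq p (n - 1) (k + 1) (i % p ^ (n - 1))

theorem hseq_add_two (p : ℕ) [NeZero p] (n k i : ℕ) :
    hseq p (n + 1) (k + 2) i =
      (cyc p)^[i / p ^ n + i % p ^ n] ⟨0, NeZero.pos p⟩ :: hseq p n (k + 1) (i % p ^ n) :=
  rfl

theorem drop_hseq {p : ℕ} [NeZero p] {n k j i : ℕ} (hkj : n - k + 1 ≤ j) (hjn : j ≤ n)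
    (hi : i < p ^ n) :
    (hseq p n k i).drop (n - j) = hseq p j (k + j - n) (i % p ^ j) := by
  induction n generalizing k i with
  | zero => omega
  | succ m ih =>
    rcases hjn.eq_or_lt with rfl | hjm
    · simp [Nat.mod_eq_of_lt hi]
    obtain ⟨k, rfl⟩ : ∃ k', k = k' + 2 := ⟨k - 2, by omega⟩
    rw [hseq_add_two, show m + 1 - j = m - j + 1 by omega, List.drop_succ_cons,
      ih (by omega) (by omega) (Nat.mod_lt _ (pow_pos (NeZero.pos p) m)),
      Nat.mod_mod_of_dvd i (pow_dvd_pow p (by omega)),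
      show k + 2 + j - (m + 1) = k + 1 + j - m by omega]

theorem statement1_general (p n k : ℕ) [NeZero p] :
    ∀ j, n - k + 1 ≤ j → j ≤ n →
      (∀ i < p ^ n,
        (hseq p n k i).drop (n - j) = hseq p j (k + j - n) (i % p ^ j)) ∧
      (∀ i, i + p ^ j ≤ p ^ n - 1 →
        (hseq p n k (i + p ^ j)).drop (n - j) = (hseq p n k i).drop (n - j)) := by
  intro j hkj hjn
  refine ⟨fun i hi => drop_hseq hkj hjn hi, fun i hi => ?_⟩
  have hpn : 0 < p ^ n := pow_pos (NeZero.pos p) n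
  rw [drop_hseq hkj hjn (by omega : i + p ^ j < p ^ n),
    drop_hseq hkj hjn (by omega : i < p ^ n), Nat.add_mod_right]

/-- For `j ∈ [n0, n]` (`n0 = n - k + 1`) and `i ∈ [0, p^n - 1]`, the suffix of length `j`
of `h^{n,k}_{[i]}` equals `h^{j, k-n+j}_{[i mod p^j]}`; in particular the sequence of
length-`j` suffixes of the terms of `h^{n,k}` is `p^j`-periodic. -/
theorem statement1 (p n k : ℕ) [NeZero p] (hp : 3 ≤ p) (hk : 1 ≤ k) (hkn : k ≤ n) :
    ∀ j, n - k + 1 ≤ j → j ≤ n →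
      (∀ i < p ^ n,
        (hseq p n k i).drop (n - j) = hseq p j (k + j - n) (i % p ^ j)) ∧
      (∀ i, i + p ^ j ≤ p ^ n - 1 →
        (hseq p n k (i + p ^ j)).drop (n - j) = (hseq p n k i).drop (n - j)) :=
  statement1_general p n k
end

section
/- Let p ≥ 3, n ≥ k ≥ 1, and n0 = n−k+1. Let ω be the permutation of the set {h^{n0,1}_{[0]}, …, h^{n0,1}_{[p^{n0}−1]}} defined by ω(h^{n0,1}_{[i]}) = h^{n0,1}_{[i+1]} for i ∈ [0, p^{n0}−2] and ω(h^{n0,1}_{[p^{n0}−1]}) = h^{n0,1}_{[0]}. For every i ∈ [1, p^n−1]: (i) H^{[n0]}_{[i]} = ω(H^{[n0]}_{[i−1]}); (ii) for every j ∈ [n0+1, n], H^{[j]}_{[i]} = θ^2(H^{[j]}_{[i−1]}) if i ≡ 0 (mod p^{j−1}), and H^{[j]}_{[i]} = θ(H^{[j]}_{[i−1]}) otherwise. -/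
/-- The permutation `ω` on the set of terms of `h^{n0,1}`, sending `h^{n0,1}_{[i]}` to
`h^{n0,1}_{[i+1]}` for `i ∈ [0, p^{n0}-2]` and `h^{n0,1}_{[p^{n0}-1]}` to `h^{n0,1}_{[0]}`. -/
def omegaPerm (p : ℕ) [NeZero p] (n0 : ℕ) (w : List (Fin p)) : List (Fin p) :=
  (refGray p n0).getD (((refGray p n0).idxOf w + 1) % p ^ n0) []

/-!
Unfolding the recursion, the suffix of length `n0` of `h^{n,k}_{[i]}` is the Gray word of index
`i mod p^{n0}`, and for `j > n0` the letter in position `j` is `⌊i / P⌋ + (i mod P)` read in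
`Fin p`, where `P = p^{j-1}`. Passing from `i - 1` to `i` this quantity grows by `1`, except when
`P ∣ i`: then the quotient gains `1` and the remainder drops from `P - 1` to `0`, a change of
`2 - P ≡ 2 (mod p)` because `p ∣ P`.
-/

open Fin.NatCast

namespace Nat

theorem succ_div_add_succ_mod_of_not_dvd {P m : ℕ} (h : ¬P ∣ m + 1) :
    (m + 1) / P + (m + 1) % P = m / P + m % P + 1 := by
  have hq := succ_div_of_not_dvd h
  have := div_add_mod m P
  have := div_add_mod (m + 1) P
  rw [hq] at this
  omega

theorem succ_div_add_succ_mod_add_of_dvd {P m : ℕ} (h : P ∣ m + 1) :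
    (m + 1) / P + (m + 1) % P + P = m / P + m % P + 2 := by
  have hq := succ_div_of_dvd h
  have hm := div_add_mod m P
  have hmul : P * (m / P + 1) = m + 1 := hq ▸ Nat.mul_div_cancel' h
  rw [mod_eq_zero_of_dvd h, hq]
  rw [mul_add] at hmul
  omega

theorem cast_succ_div_add_succ_mod_of_not_dvd {R : Type*} [AddMonoidWithOne R] {P m : ℕ}
    (h : ¬P ∣ m + 1) :
    (((m + 1) / P + (m + 1) % P : ℕ) : R) = ((m / P + m % P : ℕ) : R) + 1 := by
  rw [succ_div_add_succ_mod_of_not_dvd h, cast_succ]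

theorem cast_succ_div_add_succ_mod_of_dvd {R : Type*} [AddMonoidWithOne R] {P m : ℕ}
    (hP : (P : R) = 0) (h : P ∣ m + 1) :
    (((m + 1) / P + (m + 1) % P : ℕ) : R) = ((m / P + m % P : ℕ) : R) + 2 := by
  have := congrArg (Nat.cast : ℕ → R) (succ_div_add_succ_mod_add_of_dvd h)
  push_cast [hP, add_zero] at this ⊢
  exact this

end Nat

section GrayRecursion

variable (p : ℕ) [NeZero p]

theorem refGray_length (m : ℕ) : (refGray p m).length = p ^ m := by
  induction m with
  | zero => simp [refGray]
  | succ m ih => simp [refGray, List.length_flatMap, apply_ite, ih, pow_succ, mul_comm]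

theorem refGray_nodup (m : ℕ) : (refGray p m).Nodup := by
  induction m with
  | zero => simp [refGray]
  | succ m ih =>
    rw [refGray, List.nodup_flatMap]
    refine ⟨fun a _ => ?_, List.nodup_range.pairwise_of_forall_ne fun a ha b hb hab => ?_⟩
    · refine List.Nodup.map (fun _ _ h => List.cons_injective h) ?_
      split_ifs
      exacts [ih, List.nodup_reverse.mpr ih]
    · simp only [Function.onFun, List.disjoint_left, List.mem_map]
      rintro _ ⟨u, -, rfl⟩ ⟨v, -, h⟩
      simp only [List.cons.injEq, Fin.mk.injEq, List.mem_range] at h ha hb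
      rw [Nat.mod_eq_of_lt ha, Nat.mod_eq_of_lt hb] at h
      exact hab h.1.symm

theorem omegaPerm_refGray_getD {n0 r : ℕ} (hr : r < p ^ n0) :
    omegaPerm p n0 ((refGray p n0).getD r []) = (refGray p n0).getD ((r + 1) % p ^ n0) [] := by
  have hr' : r < (refGray p n0).length := (refGray_length p n0).symm ▸ hr
  rw [omegaPerm, List.getD_eq_getElem _ _ hr', (refGray_nodup p n0).idxOf_getElem _ hr']

theorem cyc_eq_add_one (x : Fin p) : cyc p x = x + 1 := by
  ext; simp [cyc, Fin.val_add]

theorem cyc_iterate_zero (a : ℕ) : (cyc p)^[a] ⟨0, NeZero.pos p⟩ = a := by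
  rw [show cyc p = (· + 1) from funext (cyc_eq_add_one p), add_right_iterate]
  simp

theorem hseq_drop (k : ℕ) : ∀ {n i : ℕ}, k < n → i < p ^ n →
    (hseq p n (k + 1) i).drop k = (refGray p (n - k)).getD (i % p ^ (n - k)) [] := by
  induction k with
  | zero => intro n i _ hi; simp [hseq, Nat.mod_eq_of_lt hi]
  | succ k ih =>
    intro n i hkn _
    rw [hseq, List.drop_succ_cons, ih (by omega) (Nat.mod_lt _ (NeZero.pos _)),
      Nat.mod_mod_of_dvd _ (pow_dvd_pow p (by omega)), show n - 1 - k = n - (k + 1) by omega]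

theorem hseq_getD (k : ℕ) : ∀ {n i j : ℕ}, k ≤ n → n - k < j → j ≤ n →
    (hseq p n (k + 1) i).getD (n - j) ⟨0, NeZero.pos p⟩ =
      ((i / p ^ (j - 1) + i % p ^ (j - 1) : ℕ) : Fin p) := by
  induction k with
  | zero => intros; omega
  | succ k ih =>
    intro n i j hkn hj hjn
    rw [hseq]
    rcases hjn.eq_or_lt with rfl | hjn
    · rw [Nat.sub_self, List.getD_cons_zero, cyc_iterate_zero]
    · have hsplit : p ^ (n - 1) = p ^ (j - 1) * p ^ (n - j) := by
        rw [← pow_add]; congr 1; omega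
      have hdigit : ((i / p ^ (j - 1) % p ^ (n - j) : ℕ) : Fin p) = (i / p ^ (j - 1) : ℕ) :=
        (CharP.natCast_eq_natCast (Fin p) p).2
          ((Nat.mod_modEq _ _).of_dvd (dvd_pow_self p (by omega)))
      rw [show n - j = n - 1 - j + 1 by omega, List.getD_cons_succ,
        ih (by omega) (by omega) (by omega), hsplit, Nat.mod_mul_right_div_self,
        Nat.mod_mul_right_mod, Nat.cast_add, hdigit, Nat.cast_add]

end GrayRecursion

theorem statement3_general (p n k : ℕ) [NeZero p] (hk : 1 ≤ k) (hkn : k ≤ n) :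
    ∀ i, 1 ≤ i → i < p ^ n →
      ((hseq p n k i).drop (k - 1) =
          omegaPerm p (n - k + 1) ((hseq p n k (i - 1)).drop (k - 1))) ∧
      (∀ j, n - k + 2 ≤ j → j ≤ n →
        (hseq p n k i).getD (n - j) ⟨0, NeZero.pos p⟩ =
          if i % p ^ (j - 1) = 0 then
            cyc p (cyc p ((hseq p n k (i - 1)).getD (n - j) ⟨0, NeZero.pos p⟩))
          else
            cyc p ((hseq p n k (i - 1)).getD (n - j) ⟨0, NeZero.pos p⟩)) := by
  intro i hi hin
  obtain ⟨m, rfl⟩ := Nat.exists_eq_add_of_le' hi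
  obtain ⟨k, rfl⟩ := Nat.exists_eq_add_of_le' hk
  simp only [Nat.add_sub_cancel]
  refine ⟨?_, fun j hj hjn => ?_⟩
  · rw [show n - (k + 1) + 1 = n - k by omega, hseq_drop p k (by omega) hin,
      hseq_drop p k (by omega) (by omega),
      omegaPerm_refGray_getD p (Nat.mod_lt _ (NeZero.pos _)), Nat.mod_add_mod]
  · rw [hseq_getD p k (by omega) (by omega) hjn, hseq_getD p k (by omega) (by omega) hjn,
      cyc_eq_add_one, cyc_eq_add_one, add_assoc, one_add_one_eq_two]
    split_ifs with h
    · exact Nat.cast_succ_div_add_succ_mod_of_dvd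
        (Fin.natCast_eq_zero.2 (dvd_pow_self p (by omega))) (Nat.dvd_of_mod_eq_zero h)
    · exact Nat.cast_succ_div_add_succ_mod_of_not_dvd (mt Nat.mod_eq_zero_of_dvd h)

/-- For `j ∈ [n0+1, n]` write `H^{[j]}_{[i]}` for the character in position `j`
(counted from the right, starting at 1) of `h^{n,k}_{[i]}`; `H^{[n0]}_{[i]}` is the
suffix of length `n0` of `h^{n,k}_{[i]}`. For every `i ∈ [1, p^n-1]`:
(i) `H^{[n0]}_{[i]} = ω(H^{[n0]}_{[i-1]})`; and (ii) for every `j ∈ [n0+1, n]`,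
`H^{[j]}_{[i]} = θ²(H^{[j]}_{[i-1]})` if `p^{j-1}` divides `i`, and
`H^{[j]}_{[i]} = θ(H^{[j]}_{[i-1]})` otherwise. -/
theorem statement3 (p n k : ℕ) [NeZero p] (hp : 3 ≤ p) (hk : 1 ≤ k) (hkn : k ≤ n) :
    ∀ i, 1 ≤ i → i < p ^ n →
      ((hseq p n k i).drop (k - 1) =
          omegaPerm p (n - k + 1) ((hseq p n k (i - 1)).drop (k - 1))) ∧
      (∀ j, n - k + 2 ≤ j → j ≤ n →
        (hseq p n k i).getD (n - j) ⟨0, NeZero.pos p⟩ =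
          if i % p ^ (j - 1) = 0 then
            cyc p (cyc p ((hseq p n k (i - 1)).getD (n - j) ⟨0, NeZero.pos p⟩))
          else
            cyc p ((hseq p n k (i - 1)).getD (n - j) ⟨0, NeZero.pos p⟩)) :=
  statement3_general p n k hk hkn
end
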